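/- arXiv:2501.10921 — 4 statements merged into one kernel-verified Lean document; each statement's English description precedes it below -/
import Mathlib

section
/- Let Γ be a semicomplete multipartite commutative weakly distance-regular digraph and let T={q : (1,q−1)∈∂̃(Γ)}. If 2∈T, then (s,t)∉∂̃(Γ) for all s,t≥3; that is, there is no pair of vertices x,y with ∂(x,y)≥3 and ∂(y,x)≥3. -/
open Set Matrix

namespace Paper

variable {V : Type*} {W : Type*}

/-- There is a directed walk of length `n` from `x` to `y` in the digraph with arc relation `A`. -/
def HasPathOfLength (A : V → V → Prop) (x y : V) (n : ℕ) : Prop :=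
  ∃ p : ℕ → V, p 0 = x ∧ p n = y ∧ ∀ i < n, A (p i) (p (i + 1))

/-- A digraph is strongly connected if there is a directed path between any two vertices. -/
def IsStronglyConnected (A : V → V → Prop) : Prop :=
  ∀ x y, ∃ n, HasPathOfLength A x y n

/-- The distance `∂(x,y)`: the length of a shortest directed path from `x` to `y`. -/
noncomputable def ddist (A : V → V → Prop) (x y : V) : ℕ :=
  sInf {n | HasPathOfLength A x y n}

/-- The two-way distance `∂̃(x,y) = (∂(x,y), ∂(y,x))`. -/
noncomputable def tdist (A : V → V → Prop) (x y : V) : ℕ × ℕ :=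
  (ddist A x y, ddist A y x)

/-- The two-way distance set `∂̃(Γ)`. -/
def tdistSet (A : V → V → Prop) : Set (ℕ × ℕ) :=
  {d | ∃ x y, tdist A x y = d}

/-- The number `p_{ĩ,j̃}(x,y) = |{z : ∂̃(x,z) = ĩ, ∂̃(z,y) = j̃}|`. -/
noncomputable def pnum (A : V → V → Prop) (i j : ℕ × ℕ) (x y : V) : ℕ :=
  {z | tdist A x z = i ∧ tdist A z y = j}.ncard

/-- A weakly distance-regular digraph. -/
def IsWDRD (A : V → V → Prop) : Prop :=
  IsStronglyConnected A ∧
  (∃ d ∈ tdistSet A, d.1 ≠ d.2) ∧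
  ∀ i j : ℕ × ℕ, ∀ x y x' y' : V,
    tdist A x y = tdist A x' y' → pnum A i j x y = pnum A i j x' y'

/-- Commutativity of the attached scheme: `p_{ĩ,j̃}^{h̃} = p_{j̃,ĩ}^{h̃}`. -/
def IsCommutativeDigraph (A : V → V → Prop) : Prop :=
  ∀ i j : ℕ × ℕ, ∀ x y : V, pnum A i j x y = pnum A j i x y

/-- A commutative weakly distance-regular digraph. -/
def IsCWDRD (A : V → V → Prop) : Prop :=
  IsWDRD A ∧ IsCommutativeDigraph A

/-- `A` is semicomplete multipartite with partition given by `f` (parts are the fibres). -/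
def IsSemicompleteMultipartiteWith (A : V → V → Prop) {m : ℕ} (f : V → Fin m) : Prop :=
  (∀ x, ¬ A x x) ∧ (∀ i, 2 ≤ {x | f x = i}.ncard) ∧
  ∀ x y : V, x ≠ y → ((A x y ∨ A y x) ↔ f x ≠ f y)

/-- A semicomplete multipartite digraph: the vertex set is partitioned into `m ≥ 2` partite
sets, each of size at least `2`, and two distinct vertices are joined by an arc in at least
one direction iff they lie in different partite sets. -/
def IsSemicompleteMultipartite (A : V → V → Prop) : Prop :=
  ∃ m : ℕ, 2 ≤ m ∧ ∃ f : V → Fin m, IsSemicompleteMultipartiteWith A f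

/-- A semicomplete digraph: any two distinct vertices are joined by an arc in
at least one direction. -/
def IsSemicomplete (A : V → V → Prop) : Prop :=
  (∀ x, ¬ A x x) ∧ ∀ x y : V, x ≠ y → A x y ∨ A y x

/-- A circuit of length `n`: a sequence `w₀,…,w_{n-1}` with consecutive arcs and an arc
from `w_{n-1}` back to `w₀`. -/
def HasCircuitOfLength (A : V → V → Prop) (n : ℕ) : Prop :=
  ∃ p : ℕ → V, p n = p 0 ∧ ∀ i < n, A (p i) (p (i + 1))

/-- The girth: the length of a shortest circuit. -/
noncomputable def girth (A : V → V → Prop) : ℕ :=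
  sInf {n | 1 ≤ n ∧ HasCircuitOfLength A n}

/-- Lexicographic product of digraphs. -/
def lexProd (A : V → V → Prop) (B : W → W → Prop) : V × W → V × W → Prop :=
  fun u v => A u.1 v.1 ∨ (u.1 = v.1 ∧ B u.2 v.2)

/-- The `n`-coclique extension of a digraph: `A ∘ K̄ₙ`. -/
def cocliqueExt (A : V → V → Prop) (n : ℕ) : V × Fin n → V × Fin n → Prop :=
  lexProd A (fun _ _ : Fin n => False)

/-- Isomorphism of digraphs. -/
def Iso (A : V → V → Prop) (B : W → W → Prop) : Prop :=
  ∃ e : V ≃ W, ∀ x y : V, A x y ↔ B (e x) (e y)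

/-- An `(m,r)`-team semicomplete multipartite digraph with partite sets the fibres of `f`:
`m ≥ 2` parts, each of size `r ≥ 2`. -/
def IsTeamSMD (A : V → V → Prop) {m : ℕ} (f : V → Fin m) (r : ℕ) : Prop :=
  2 ≤ m ∧ 2 ≤ r ∧ (∀ x, ¬ A x x) ∧ (∀ i : Fin m, {x | f x = i}.ncard = r) ∧
  ∀ x y : V, x ≠ y → ((A x y ∨ A y x) ↔ f x ≠ f y)

/-- Regular of valency `k`: every vertex has exactly `k` out-neighbours and `k`
in-neighbours. -/
def IsRegularOfValency (A : V → V → Prop) (k : ℕ) : Prop :=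
  ∀ x : V, {y | A x y}.ncard = k ∧ {y | A y x}.ncard = k

open Classical in
/-- Adjacency matrix of the symmetric part `EΓ`. -/
noncomputable def matE (A : V → V → Prop) : Matrix V V ℤ :=
  Matrix.of fun x y => if A x y ∧ A y x then 1 else 0

open Classical in
/-- Adjacency matrix of the asymmetric part `A⃗Γ`. -/
noncomputable def matAr (A : V → V → Prop) : Matrix V V ℤ :=
  Matrix.of fun x y => if A x y ∧ ¬ A y x then 1 else 0

open Classical in
/-- Adjacency matrix of a digraph. -/
noncomputable def matAdj (A : V → V → Prop) : Matrix V V ℤ :=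
  Matrix.of fun x y => if A x y then 1 else 0

/-- The all-ones matrix `J`. -/
def matJ (V : Type*) : Matrix V V ℤ := Matrix.of fun _ _ => 1

open Classical in
/-- The matrix equations in the definition of a doubly regular team semicomplete multipartite
digraph, with constants `t, αᵢ, βᵢ, γᵢ, ηᵢ` (`A₀ = matE A`, `A₁ = matAr A`). -/
def DRConstEq [Fintype V] (A : V → V → Prop) (t : ℤ) (α β γ η : ℕ → ℤ) : Prop :=
  ∀ i j : Fin 2,
    ![matE A, matAr A] i * ![matE A, matAr A] j =
      (if (i : ℕ) + (j : ℕ) = 0 then t else 0) • (1 : Matrix V V ℤ) +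
      α ((i : ℕ) + (j : ℕ)) • matAr A +
      β ((i : ℕ) + (j : ℕ)) • (matAr A)ᵀ +
      γ ((i : ℕ) + (j : ℕ)) • matE A +
      η ((i : ℕ) + (j : ℕ)) • (matJ V - 1 - matAr A - (matAr A)ᵀ - matE A)

/-- A doubly regular `(m,r)`-team semicomplete multipartite digraph. -/
def IsDoublyRegularTeamSMD [Fintype V] (A : V → V → Prop) {m : ℕ} (f : V → Fin m)
    (r : ℕ) : Prop :=
  IsTeamSMD A f r ∧ (∃ k, IsRegularOfValency A k) ∧
  ∃ t α β γ η, DRConstEq A t α β γ η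

/-- `A_j⁺(x)`: out-neighbours of `x` in the part `j` via single arcs. -/
def Aplus (A : V → V → Prop) {m : ℕ} (f : V → Fin m) (j : Fin m) (x : V) : Set V :=
  {y | f y = j ∧ A x y ∧ ¬ A y x}

/-- `E_j(x)`: neighbours of `x` in the part `j` via edges (pairs of opposite arcs). -/
def Epart (A : V → V → Prop) {m : ℕ} (f : V → Fin m) (j : Fin m) (x : V) : Set V :=
  {y | f y = j ∧ A x y ∧ A y x}

/-- Type I: `β₁+β₂-α₁-α₂ = r` and the digraph is an `r`-coclique extension of a
semicomplete digraph. -/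
def TypeI (A : V → V → Prop) (r : ℕ) (α β : ℕ → ℤ) : Prop :=
  β 1 + β 2 - α 1 - α 2 = (r : ℤ) ∧
  ∃ (N : ℕ) (S : Fin N → Fin N → Prop),
    1 ≤ N ∧ IsSemicomplete S ∧ Iso A (cocliqueExt S r)

/-- Type II: `β₁+β₂-α₁-α₂ = 0` and `c_{ij} = c_{ji} = (r - e_{ij})/2` for all pairs `i ≠ j`. -/
def TypeII (A : V → V → Prop) {m : ℕ} (f : V → Fin m) (r : ℕ) (α β : ℕ → ℤ) : Prop :=
  β 1 + β 2 - α 1 - α 2 = 0 ∧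
  ∀ i j : Fin m, i ≠ j → ∃ c e : ℕ,
    (∀ x, f x = i → (Aplus A f j x).ncard = c ∧ (Epart A f j x).ncard = e) ∧
    (∀ y, f y = j → (Aplus A f i y).ncard = c) ∧
    c + c + e = r

/-- Condition (ii) of Type III for the ordered pair `(i,j)`: `V_i` splits as
`V_i' ∪ V_i''` with `(V_i' × V_j) ∪ (V_j × V_i'') ⊆ A⃗Γ`. -/
def TypeIIIsplitB (A : V → V → Prop) {m : ℕ} (f : V → Fin m) (i j : Fin m) : Prop :=
  ∃ S : Set V, S ⊆ {x | f x = i} ∧ S.Nonempty ∧ ({x | f x = i} \ S).Nonempty ∧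
    (∀ x ∈ S, ∀ y : V, f y = j → A x y ∧ ¬ A y x) ∧
    (∀ y : V, f y = j → ∀ x ∈ {x | f x = i} \ S, A y x ∧ ¬ A x y)

/-- Condition (iii) of Type III for the pair `(i,j)`. -/
def TypeIIIsplitC (A : V → V → Prop) {m : ℕ} (f : V → Fin m) (i j : Fin m) : Prop :=
  ∃ S T' : Set V,
    S ⊆ {x | f x = i} ∧ S.Nonempty ∧ ({x | f x = i} \ S).Nonempty ∧
    T' ⊆ {y | f y = j} ∧ T'.Nonempty ∧ ({y | f y = j} \ T').Nonempty ∧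
    (∀ x ∈ S, ∀ y ∈ T', A x y ∧ A y x) ∧
    (∀ x ∈ {x | f x = i} \ S, ∀ y ∈ {y | f y = j} \ T', A x y ∧ A y x) ∧
    (∀ x ∈ S, ∀ y ∈ {y | f y = j} \ T', A x y ∧ ¬ A y x) ∧
    (∀ y ∈ T', ∀ x ∈ {x | f x = i} \ S, A y x ∧ ¬ A x y)

/-- Type III. -/
def TypeIII (A : V → V → Prop) {m : ℕ} (f : V → Fin m) (r : ℕ) (α β : ℕ → ℤ) : Prop :=
  2 * (β 1 + β 2 - α 1 - α 2) = (r : ℤ) ∧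
  ∀ i j : Fin m, i ≠ j →
    (∀ x y : V, f x = i → f y = j → A x y ∧ A y x) ∨
    (TypeIIIsplitB A f i j ∨ TypeIIIsplitB A f j i) ∨
    TypeIIIsplitC A f i j

/-- An `(m,r)`-team tournament: an `(m,r)`-team semicomplete multipartite digraph with
no pair of opposite arcs. -/
def IsTeamTournament (A : V → V → Prop) {m : ℕ} (f : V → Fin m) (r : ℕ) : Prop :=
  IsTeamSMD A f r ∧ ∀ x y : V, ¬ (A x y ∧ A y x)

open Classical in
/-- A doubly regular `(m,r)`-team tournament with parameters `(α,β,γ)`: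
`A² = αA + βAᵀ + γ(J - I - A - Aᵀ)`. -/
def IsDRTeamTournament [Fintype V] (A : V → V → Prop) {m : ℕ} (f : V → Fin m) (r : ℕ)
    (α β γ : ℤ) : Prop :=
  IsTeamTournament A f r ∧ (∃ k, IsRegularOfValency A k) ∧
  matAdj A * matAdj A =
    α • matAdj A + β • (matAdj A)ᵀ + γ • (matJ V - 1 - matAdj A - (matAdj A)ᵀ)

/-- Type II of a doubly regular team tournament: `β - α = 0`, `r` even, and
`|N⁺(x) ∩ V_i| = r/2` for every partite set `V_i` and vertex `x ∉ V_i`. -/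
def TournamentTypeII (A : V → V → Prop) {m : ℕ} (f : V → Fin m) (r : ℕ) (α β : ℤ) : Prop :=
  β = α ∧ Even r ∧ ∀ (i : Fin m) (x : V), f x ≠ i → 2 * {y | f y = i ∧ A x y}.ncard = r

/-- The Cayley digraph `Cay(ℤ₆, {1,2})`. -/
def Cay6 : ZMod 6 → ZMod 6 → Prop := fun x y => y - x = 1 ∨ y - x = 2

/-- The directed cycle `C₄`. -/
def C4 : ZMod 4 → ZMod 4 → Prop := fun x y => y = x + 1


lemma ddist_le {A : V → V → Prop} {x y : V} {n : ℕ} (h : HasPathOfLength A x y n) :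
    ddist A x y ≤ n := Nat.sInf_le h

lemma ddist_self (A : V → V → Prop) (x : V) : ddist A x x = 0 :=
  Nat.eq_zero_of_le_zero (Nat.sInf_le ⟨fun _ => x, rfl, rfl, fun i hi => absurd hi (Nat.not_lt_zero i)⟩)

lemma path_one {A : V → V → Prop} {x y : V} (h : A x y) : HasPathOfLength A x y 1 :=
  ⟨fun i => if i = 0 then x else y, by simp, by simp, by
    intro i hi
    interval_cases i
    simpa using h⟩

lemma path_two {A : V → V → Prop} {x z y : V} (h1 : A x z) (h2 : A z y) :
    HasPathOfLength A x y 2 :=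
  ⟨fun i => if i = 0 then x else if i = 1 then z else y, by simp, by simp, by
    intro i hi
    interval_cases i <;> simp [h1, h2]⟩

lemma arc_of_ddist_one {A : V → V → Prop} {x y : V} (h : ddist A x y = 1) : A x y := by
  have hne : {n | HasPathOfLength A x y n}.Nonempty := by
    by_contra hc
    rw [Set.not_nonempty_iff_eq_empty] at hc
    rw [ddist, hc] at h
    simp at h
  have hm := Nat.sInf_mem hne
  rw [show sInf {n | HasPathOfLength A x y n} = ddist A x y from rfl, h] at hm
  obtain ⟨p, h0, h1, hA⟩ := hm
  have := hA 0 one_pos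
  rwa [h0, h1] at this

/-- if `2 ∈ T` (i.e. `(1,1) ∈ ∂̃(Γ)`) then `(s,t) ∉ ∂̃(Γ)` for all `s,t ≥ 3`. -/
theorem statement_11 {V : Type*} [Fintype V] [Nonempty V] (A : V → V → Prop)
    (hsm : IsSemicompleteMultipartite A) (h : IsCWDRD A)
    (h2 : ((1 : ℕ), (1 : ℕ)) ∈ tdistSet A) :
    ∀ s t : ℕ, 3 ≤ s → 3 ≤ t → (s, t) ∉ tdistSet A := by
  intro s t hs ht hst
  obtain ⟨m, hm, f, hirr, hsize, hf⟩ := hsm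
  obtain ⟨⟨hsc, _hne, hreg⟩, _hcomm⟩ := h
  obtain ⟨u, v, huv⟩ := h2
  obtain ⟨x, y, hxy⟩ := hst
  have hdxy : ddist A x y = s := congrArg Prod.fst hxy
  have hdyx : ddist A y x = t := congrArg Prod.snd hxy
  have hduv : ddist A u v = 1 := congrArg Prod.fst huv
  have hdvu : ddist A v u = 1 := congrArg Prod.snd huv
  have hself : ∀ w : V, tdist A w w = (0, 0) := fun w => by
    simp [tdist, ddist_self]
  have hposu : 0 < pnum A (1, 1) (1, 1) u u := by
    rw [pnum, Set.ncard_pos]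
    exact ⟨v, by simp [tdist, hduv, hdvu], by simp [tdist, hduv, hdvu]⟩
  have hp : pnum A (1, 1) (1, 1) x x = pnum A (1, 1) (1, 1) u u :=
    hreg (1, 1) (1, 1) x x u u (by rw [hself, hself])
  have hposx : 0 < pnum A (1, 1) (1, 1) x x := hp ▸ hposu
  obtain ⟨z, hz1, _hz2⟩ :=
    Set.nonempty_of_ncard_ne_zero (Nat.pos_iff_ne_zero.mp hposx)
  have hxz : A x z := arc_of_ddist_one (congrArg Prod.fst hz1)
  have hzx : A z x := arc_of_ddist_one (congrArg Prod.snd hz1)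
  have hxnez : x ≠ z := fun hxe => hirr x (hxe ▸ hxz)
  have hfxz : f x ≠ f z := (hf x z hxnez).mp (Or.inl hxz)
  have hxney : x ≠ y := by
    intro hxe
    rw [hxe, ddist_self] at hdxy
    omega
  have hnAxy : ¬ A x y := fun hA => by
    have := ddist_le (path_one hA)
    omega
  have hnAyx : ¬ A y x := fun hA => by
    have := ddist_le (path_one hA)
    omega
  have hfxy : f x = f y := by
    by_contra hc
    rcases (hf x y hxney).mpr hc with hA | hA
    · exact hnAxy hA
    · exact hnAyx hA
  have hzney : z ≠ y := by
    intro hze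
    exact hfxz (by rw [hze, hfxy])
  rcases (hf z y hzney).mpr (by rw [← hfxy]; exact fun h' => hfxz h'.symm) with hA | hA
  · have := ddist_le (path_two hxz hA)
    omega
  · have := ddist_le (path_two hA hzx)
    omega

end Paper
end

section
/- Let Γ be a semicomplete multipartite commutative weakly distance-regular digraph. If i,j,s,t≥2, then there is no triple of vertices x,y,z with ∂̃(x,z)=(1,q) for some q with q+1∈T, ∂̃(x,y)=(i,j), and ∂̃(y,z)=(s,t). (In the paper's notation: Γ_{1,q}∉Γ_{i,j}Γ_{s,t} for all q with q+1∈T.) -/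
open Set Matrix

namespace Paper

variable {V : Type*} {W : Type*}

/-- if `i,j,s,t ≥ 2` then there is no triple `x,y,z` with `∂̃(x,z) = (1,q)`,
`∂̃(x,y) = (i,j)` and `∂̃(y,z) = (s,t)`. -/
theorem statement_12 {V : Type*} [Fintype V] [Nonempty V] (A : V → V → Prop)
    (hsm : IsSemicompleteMultipartite A) (h : IsCWDRD A)
    (i j s t : ℕ) (hi : 2 ≤ i) (hj : 2 ≤ j) (hs : 2 ≤ s) (ht : 2 ≤ t) :
    ∀ (q : ℕ) (x y z : V), tdist A x z = (1, q) → tdist A x y = (i, j) →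
      tdist A y z = (s, t) → False := by
  intro q x y z hxz hxy hyz
  have hdxz : ddist A x z = 1 := congrArg Prod.fst hxz
  have hdxy : ddist A x y = i := congrArg Prod.fst hxy
  have hdyx : ddist A y x = j := congrArg Prod.snd hxy
  have hdyz : ddist A y z = s := congrArg Prod.fst hyz
  have hdzy : ddist A z y = t := congrArg Prod.snd hyz
  obtain ⟨m, hm, f, hloop, _, hpart⟩ := hsm
  -- basic facts
  have hself : ∀ u : V, ddist A u u = 0 := fun u =>
    Nat.sInf_eq_zero.2 (Or.inl ⟨fun _ => u, rfl, rfl, fun i hi => absurd hi (by omega)⟩)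
  have harc : ∀ u v : V, A u v → ddist A u v ≤ 1 := by
    intro u v huv
    apply Nat.sInf_le
    refine ⟨fun n => if n = 0 then u else v, by simp, by simp, ?_⟩
    intro i hi
    interval_cases i
    simpa using huv
  -- x ≠ y, no arcs between x and y
  have hxyne : x ≠ y := fun e => by rw [e, hself] at hdxy; omega
  have hnxy : ¬ A x y := fun h => by have := harc x y h; omega
  have hnyx : ¬ A y x := fun h => by have := harc y x h; omega
  have hyzne : y ≠ z := fun e => by rw [e, hself] at hdyz; omega
  have hnyz : ¬ A y z := fun h => by have := harc y z h; omega
  have hnzy : ¬ A z y := fun h => by have := harc z y h; omega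
  have hxzne : x ≠ z := fun e => by rw [e, hself] at hdxz; omega
  have hfxy : f x = f y := by
    by_contra hne
    exact absurd ((hpart x y hxyne).2 hne) (by tauto)
  have hfyz : f y = f z := by
    by_contra hne
    exact absurd ((hpart y z hyzne).2 hne) (by tauto)
  -- x and z are in the same part, yet there is an arc x → z
  have hAxz : A x z := by
    have hne : {n | HasPathOfLength A x z n}.Nonempty := by
      by_contra hemp
      rw [Set.not_nonempty_iff_eq_empty] at hemp
      rw [ddist, hemp] at hdxz
      simp at hdxz
    have hmem := Nat.sInf_mem hne
    rw [show sInf {n | HasPathOfLength A x z n} = 1 from hdxz] at hmem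
    obtain ⟨p, hp0, hp1, hps⟩ := hmem
    have := hps 0 (by omega)
    rwa [hp0, hp1] at this
  have : f x ≠ f z := (hpart x z hxzne).1 (Or.inl hAxz)
  exact this (hfxy.trans hfyz)

end Paper
end

section
/- Let Γ be a semicomplete multipartite commutative weakly distance-regular digraph and let T={q : (1,q−1)∈∂̃(Γ)}. If q∈T, then Γ_{1,q−1}²≠{Γ_{1,q−1}}; equivalently, there exist vertices x,y,z with ∂̃(x,y)=∂̃(y,z)=(1,q−1) and ∂̃(x,z)≠(1,q−1). -/
open Set Matrix

namespace Paper

variable {V : Type*} {W : Type*}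

/-- if `(1,q) ∈ ∂̃(Γ)` then `Γ_{1,q}² ≠ {Γ_{1,q}}`: there are vertices
`x,y,z` with `∂̃(x,y) = ∂̃(y,z) = (1,q)` and `∂̃(x,z) ≠ (1,q)`. -/
theorem statement_13 {V : Type*} [Fintype V] [Nonempty V] (A : V → V → Prop)
    (hsm : IsSemicompleteMultipartite A) (h : IsCWDRD A)
    (q : ℕ) (hq : ((1 : ℕ), q) ∈ tdistSet A) :
    ∃ x y z : V, tdist A x y = (1, q) ∧ tdist A y z = (1, q) ∧ tdist A x z ≠ (1, q) := by
  by_contra hcon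
  push_neg at hcon
  obtain ⟨x₀, y₀, hxy⟩ := hq
  have hself : ∀ x : V, tdist A x x = (0, 0) := by
    intro x
    have h0 : HasPathOfLength A x x 0 :=
      ⟨fun _ => x, rfl, rfl, fun i hi => absurd hi (Nat.not_lt_zero i)⟩
    have hd : ddist A x x = 0 := Nat.sInf_eq_zero.mpr (Or.inl h0)
    simp [tdist, hd]
  have hswap : ∀ x z : V, tdist A x z = (1, q) → tdist A z x = (q, 1) := by
    intro x z hxz
    have h1 : ddist A x z = 1 := congrArg Prod.fst hxz
    have h2 : ddist A z x = q := congrArg Prod.snd hxz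
    simp [tdist, h1, h2]
  have hset : ∀ x : V,
      {z | tdist A x z = (1, q) ∧ tdist A z x = (q, 1)} = {z | tdist A x z = (1, q)} := by
    intro x; ext z
    simp only [Set.mem_setOf_eq, and_iff_left_iff_imp]
    exact hswap x z
  have hk : pnum A (1, q) (q, 1) x₀ x₀ = pnum A (1, q) (q, 1) y₀ y₀ :=
    h.1.2.2 (1, q) (q, 1) x₀ x₀ y₀ y₀ (by rw [hself, hself])
  rw [pnum, pnum, hset, hset] at hk
  have hsub : {z | tdist A y₀ z = (1, q)} ⊂ {z | tdist A x₀ z = (1, q)} := by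
    constructor
    · intro z hz
      exact hcon x₀ y₀ z hxy hz
    · intro hcontra
      have hy : y₀ ∈ {z | tdist A y₀ z = (1, q)} := hcontra hxy
      have : tdist A y₀ y₀ = (1, q) := hy
      rw [hself] at this
      exact absurd (congrArg Prod.fst this) (by simp)
  have hlt := Set.ncard_lt_ncard hsub (Set.toFinite _)
  omega

end Paper
end

section
/- Let Γ be a semicomplete multipartite commutative weakly distance-regular digraph, let T={q : (1,q−1)∈∂̃(Γ)}, and let s≥3. If ∂̃(Γ)∖{(1,q),(q,1) : q+1∈T} ⊆ {(0,0),(2,2),(s,s)}, then for all vertices x,y,z with ∂̃(x,y)=∂̃(y,z)=(s,s), either x=z or ∂̃(x,z)=(s,s). -/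
open Set Matrix

namespace Paper

variable {V : Type*} {W : Type*}

section Aux

variable {V : Type*}

lemma ddist_le_zero_self (A : V → V → Prop) (x : V) : ddist A x x ≤ 0 := by
  apply Nat.sInf_le
  exact ⟨fun _ => x, rfl, rfl, fun i hi => absurd hi (Nat.not_lt_zero i)⟩

lemma eq_of_ddist_eq_zero {A : V → V → Prop} {x y : V}
    (hne : {n | HasPathOfLength A x y n}.Nonempty) (h0 : ddist A x y = 0) : x = y := by
  have := Nat.sInf_mem hne
  have hd : sInf {n | HasPathOfLength A x y n} = 0 := h0
  rw [hd] at this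
  obtain ⟨p, hp0, hpn, -⟩ := this
  rw [← hp0, hpn]

lemma arc_of_ddist_eq_one {A : V → V → Prop} {x y : V}
    (hne : {n | HasPathOfLength A x y n}.Nonempty) (h1 : ddist A x y = 1) : A x y := by
  have := Nat.sInf_mem hne
  have hd : sInf {n | HasPathOfLength A x y n} = 1 := h1
  rw [hd] at this
  obtain ⟨p, hp0, hpn, harc⟩ := this
  have := harc 0 one_pos
  rwa [hp0, hpn] at this

lemma ddist_le_one_of_arc {A : V → V → Prop} {x y : V} (h : A x y) : ddist A x y ≤ 1 := by
  apply Nat.sInf_le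
  refine ⟨fun i => if i = 0 then x else y, by simp, by simp, fun i hi => ?_⟩
  interval_cases i
  simpa using h

lemma ddist_le_two_of_arcs {A : V → V → Prop} {x w y : V} (h1 : A x w) (h2 : A w y) :
    ddist A x y ≤ 2 := by
  apply Nat.sInf_le
  refine ⟨fun i => if i = 0 then x else if i = 1 then w else y, by simp, by simp,
    fun i hi => ?_⟩
  interval_cases i
  · simpa using h1
  · simpa using h2

lemma exists_mid_of_ddist_eq_two {A : V → V → Prop} {x y : V}
    (hne : {n | HasPathOfLength A x y n}.Nonempty) (h2 : ddist A x y = 2) :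
    ∃ w, A x w ∧ A w y := by
  have := Nat.sInf_mem hne
  have hd : sInf {n | HasPathOfLength A x y n} = 2 := h2
  rw [hd] at this
  obtain ⟨p, hp0, hpn, harc⟩ := this
  refine ⟨p 1, ?_, ?_⟩
  · have := harc 0 (by norm_num); rwa [hp0] at this
  · have := harc 1 (by norm_num); rwa [hpn] at this

end Aux

/-- if `∂̃(Γ) ∖ {(1,q),(q,1) : q+1 ∈ T} ⊆ {(0,0),(2,2),(s,s)}` with `s ≥ 3`,
then for all `x,y,z` with `∂̃(x,y) = ∂̃(y,z) = (s,s)`, either `x = z` or `∂̃(x,z) = (s,s)`. -/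
theorem statement_14 {V : Type*} [Fintype V] [Nonempty V] (A : V → V → Prop)
    (hsm : IsSemicompleteMultipartite A) (h : IsCWDRD A)
    (s : ℕ) (hs : 3 ≤ s)
    (hsub : tdistSet A \ {d | ∃ q : ℕ, (1, q) ∈ tdistSet A ∧ (d = (1, q) ∨ d = (q, 1))}
      ⊆ {((0 : ℕ), (0 : ℕ)), (2, 2), (s, s)}) :
    ∀ x y z : V, tdist A x y = (s, s) → tdist A y z = (s, s) →
      x = z ∨ tdist A x z = (s, s) := by
  obtain ⟨m, hm2, f, hirr, hsize, hiff⟩ := hsm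
  obtain ⟨⟨hsc, -, -⟩, -⟩ := h
  intro x y z hxy hyz
  have hxy1 : ddist A x y = s := congrArg Prod.fst hxy
  have hxy2 : ddist A y x = s := congrArg Prod.snd hxy
  have hyz1 : ddist A y z = s := congrArg Prod.fst hyz
  have hyz2 : ddist A z y = s := congrArg Prod.snd hyz
  -- from ∂̃ = (s,s) with s ≥ 3 : non-adjacent, distinct, same part
  have samePart : ∀ u v : V, ddist A u v = s → ddist A v u = s → f u = f v := by
    intro u v huv hvu
    have hneq : u ≠ v := by
      rintro rfl
      have := ddist_le_zero_self A u
      omega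
    by_contra hfne
    rcases (hiff u v hneq).mpr hfne with harc | harc
    · have := ddist_le_one_of_arc harc; omega
    · have := ddist_le_one_of_arc harc; omega
  have hfxy : f x = f y := samePart x y hxy1 hxy2
  have hfyz : f y = f z := samePart y z hyz1 hyz2
  have hfxz : f x = f z := hfxy.trans hfyz
  by_cases hxz : x = z
  · exact Or.inl hxz
  right
  -- x and z are non-adjacent since they are in the same part
  have hnadj : ¬ (A x z ∨ A z x) := fun harc => (hiff x z hxz).mp harc hfxz
  have hd1 : ddist A x z ≠ 1 := fun h1 =>
    hnadj (Or.inl (arc_of_ddist_eq_one (hsc x z) h1))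
  have hd1' : ddist A z x ≠ 1 := fun h1 =>
    hnadj (Or.inr (arc_of_ddist_eq_one (hsc z x) h1))
  have hd0 : ddist A x z ≠ 0 := fun h0 => hxz (eq_of_ddist_eq_zero (hsc x z) h0)
  have hmem : tdist A x z ∈ tdistSet A := ⟨x, z, rfl⟩
  have hnot : tdist A x z ∉
      {d : ℕ × ℕ | ∃ q : ℕ, (1, q) ∈ tdistSet A ∧ (d = (1, q) ∨ d = (q, 1))} := by
    rintro ⟨q, -, hq | hq⟩
    · exact hd1 (congrArg Prod.fst hq)
    · exact hd1' (congrArg Prod.snd hq)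
  have htri := hsub ⟨hmem, hnot⟩
  rcases htri with h00 | h22 | hss
  · exact absurd (congrArg Prod.fst h00) hd0
  · -- ∂̃(x,z) = (2,2) : get a midpoint w and derive a contradiction
    exfalso
    have h2 : ddist A x z = 2 := congrArg Prod.fst h22
    obtain ⟨w, hxw, hwz⟩ := exists_mid_of_ddist_eq_two (hsc x z) h2
    have hwnex : x ≠ w := by rintro rfl; exact hirr x hxw
    have hfwx : f x ≠ f w := (hiff x w hwnex).mp (Or.inl hxw)
    have hwy : w ≠ y := by
      rintro rfl
      have := ddist_le_one_of_arc hxw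
      omega
    have hfwy : f w ≠ f y := fun he => hfwx (hfxy.trans he.symm)
    rcases (hiff w y hwy).mpr hfwy with harc | harc
    · have := ddist_le_two_of_arcs hxw harc
      omega
    · have := ddist_le_two_of_arcs harc hwz
      omega
  · exact hss


end Paper
end
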